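/- There is a constant C, depending only on γ, ν₀, ν₁, such that for every multi-index α and every 0 < t ≤ 1: (∫_{ζ₁>0} |φ_α(ζ)|² (ν(ζ)/ζ₁²)² e^{−2ν(ζ)t/ζ₁} dζ)^{1/2} ≤ C A_α t^{−3/2}(1+|ln t|)^{1/2}. -/

import Mathlib

/-!
Coordinatewise, `|x|^a e^{-x²/4}` is maximal at `x² = 2a`, so `|φ_α(ζ)| ≤ π^{-3/4} A_α e^{-|ζ|²/4}`.
Since `0 < γ ≤ 1`, `ν₀ ≤ ν(ζ) ≤ ν₁ (1 + |ζ|)`, and the leftover Gaussian absorbs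
`(1 + |ζ|)²`: on `ζ₁ > 0` the integrand is at most `4 π^{-3/2} ν₁² A_α²` times
`ζ₁^{-4} e^{-2ν₀t/ζ₁} e^{-ζ₂²/4} e^{-ζ₃²/4}`. By Fubini and the substitution `x ↦ 1/x`, which
turns `∫₀^∞ x^{-4} e^{-c/x} dx` into `Γ(3)/c³`, this majorant has integral `π/(ν₀t)³`. Hence the
bound holds with `C = 2 ν₁ π^{-1/4} ν₀^{-3/2}` even without the logarithmic factor.
-/

open MeasureTheory Real Set

noncomputable section

/-- Euclidean norm of a point of ℝ³ (written in coordinates). -/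
def enr (ζ : Fin 3 → ℝ) : ℝ := Real.sqrt (ζ 0 ^ 2 + ζ 1 ^ 2 + ζ 2 ^ 2)

/-- The weight functions φ_α(ζ) = π^{-3/4} ζ₁^{α₁} ζ₂^{α₂} ζ₃^{α₃} e^{-|ζ|²/2}. -/
def phiα (α : Fin 3 → ℕ) (ζ : Fin 3 → ℝ) : ℝ :=
  Real.pi ^ (-(3 : ℝ) / 4) * ζ 0 ^ (α 0) * ζ 1 ^ (α 1) * ζ 2 ^ (α 2) *
    Real.exp (-(enr ζ) ^ 2 / 2)

/-- A_α = (2α₁)^{α₁/2}(2α₂)^{α₂/2}(2α₃)^{α₃/2} e^{-(α₁+α₂+α₃)/2} (with 0⁰ = 1). -/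
def Aα (α : Fin 3 → ℕ) : ℝ :=
  (2 * (α 0 : ℝ)) ^ ((α 0 : ℝ) / 2) * (2 * (α 1 : ℝ)) ^ ((α 1 : ℝ) / 2) *
    (2 * (α 2 : ℝ)) ^ ((α 2 : ℝ) / 2) *
    Real.exp (-((α 0 : ℝ) + (α 1 : ℝ) + (α 2 : ℝ)) / 2)

/-- The integral operator K(g)(ζ) = ∫ k(ζ,ζ*) g(ζ*) dζ*. -/
def Kop (k : (Fin 3 → ℝ) → (Fin 3 → ℝ) → ℝ) (g : (Fin 3 → ℝ) → ℝ) (ζ : Fin 3 → ℝ) : ℝ :=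
  ∫ ζs, k ζ ζs * g ζs

/-- The norm ‖g‖_* = (∫ g(ζ)² ν(ζ) dζ)^{1/2}. -/
def starNorm (ν : (Fin 3 → ℝ) → ℝ) (g : (Fin 3 → ℝ) → ℝ) : ℝ :=
  Real.sqrt (∫ ζ, (g ζ) ^ 2 * ν ζ)

/-- Mild (integral-equation) solution of ζ₁ ∂ₓ f = -ν f + K(f) on [0, l]. -/
def MildSolution (l : ℝ) (ν : (Fin 3 → ℝ) → ℝ)
    (k : (Fin 3 → ℝ) → (Fin 3 → ℝ) → ℝ) (f : ℝ → (Fin 3 → ℝ) → ℝ) : Prop :=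
  (∀ x ∈ Icc (0 : ℝ) l, ∀ ζ : Fin 3 → ℝ, 0 < ζ 0 →
    f x ζ = Real.exp (-(ν ζ * x) / |ζ 0|) * f 0 ζ +
      ∫ s in (0 : ℝ)..x, (1 / |ζ 0|) * Real.exp (-(ν ζ * (x - s)) / |ζ 0|) * Kop k (f s) ζ) ∧
  (∀ x ∈ Icc (0 : ℝ) l, ∀ ζ : Fin 3 → ℝ, ζ 0 < 0 →
    f x ζ = Real.exp (-(ν ζ * (l - x)) / |ζ 0|) * f l ζ +
      ∫ s in x..l, (1 / |ζ 0|) * Real.exp (-(ν ζ * (s - x)) / |ζ 0|) * Kop k (f s) ζ)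

theorem integral_rpow_neg_mul_exp_neg_div_Ioi {s c : ℝ} (hs : 1 < s) (hc : 0 < c) :
    ∫ x in Ioi (0 : ℝ), x ^ (-s) * exp (-c / x) = (1 / c) ^ (s - 1) * Gamma (s - 1) := by
  rw [← integral_comp_rpow_Ioi _ (neg_ne_zero.2 one_ne_zero : (-1 : ℝ) ≠ 0),
    ← integral_rpow_mul_exp_neg_mul_Ioi (by linarith) hc]
  refine setIntegral_congr_fun measurableSet_Ioi fun x (hx : 0 < x) => ?_
  rw [rpow_neg_one, inv_rpow hx.le, rpow_neg hx.le, inv_inv, div_inv_eq_mul, smul_eq_mul,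
    abs_neg, abs_one, one_mul, show s - 1 - 1 = -1 - 1 + s by ring, rpow_add hx, neg_mul]
  ring

theorem integrableOn_rpow_neg_mul_exp_neg_div_Ioi {s c : ℝ} (hs : 1 < s) (hc : 0 < c) :
    IntegrableOn (fun x : ℝ => x ^ (-s) * exp (-c / x)) (Ioi 0) := by
  refine Integrable.of_integral_ne_zero ?_
  rw [integral_rpow_neg_mul_exp_neg_div_Ioi hs hc]
  have := Gamma_pos_of_pos (sub_pos.2 hs)
  positivity

theorem abs_pow_mul_exp_neg_sq_div_four_le (a : ℕ) (x : ℝ) :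
    |x| ^ a * exp (-x ^ 2 / 4) ≤ (2 * (a : ℝ)) ^ ((a : ℝ) / 2) * exp (-(a : ℝ) / 2) := by
  rcases Nat.eq_zero_or_pos a with rfl | ha
  · simpa using exp_le_one_iff.2 (by nlinarith [sq_nonneg x] : -x ^ 2 / 4 ≤ 0)
  rcases eq_or_ne x 0 with rfl | hx
  · rw [abs_zero, zero_pow ha.ne', zero_mul]
    positivity
  have ha' : (0 : ℝ) < a := by exact_mod_cast ha
  have hx' : 0 < |x| := abs_pos.2 hx
  -- `log y ≤ y - 1` at `y = x² / (2a)`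
  have hlog := log_le_sub_one_of_pos (by positivity : 0 < x ^ 2 / (2 * a))
  rw [log_div (by positivity) (by positivity), ← sq_abs x, log_pow, sq_abs] at hlog
  rw [← rpow_natCast, rpow_def_of_pos hx', rpow_def_of_pos (by positivity), ← exp_add,
    ← exp_add, exp_le_exp]
  have e : (a : ℝ) / 2 * (x ^ 2 / (2 * a)) = x ^ 2 / 4 := by field_simp; ring
  push_cast at hlog
  nlinarith [mul_le_mul_of_nonneg_left hlog (by positivity : (0 : ℝ) ≤ a / 2)]

theorem one_add_sq_mul_exp_neg_sq_div_four_le (r : ℝ) : (1 + r) ^ 2 * exp (-r ^ 2 / 4) ≤ 4 := by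
  have hexp : 1 + r ^ 2 ≤ 2 * exp (r ^ 2 / 4) := by
    nlinarith [quadratic_le_exp_of_nonneg (by positivity : 0 ≤ r ^ 2 / 4),
      sq_nonneg (r ^ 2 / 4 - 1)]
  calc (1 + r) ^ 2 * exp (-r ^ 2 / 4) ≤ 4 * exp (r ^ 2 / 4) * exp (-r ^ 2 / 4) := by
        gcongr
        nlinarith [sq_nonneg (r - 1)]
    _ = 4 := by rw [mul_assoc, ← exp_add, neg_div, add_neg_cancel, exp_zero, mul_one]

theorem integral_fin_three_mul (f g h : ℝ → ℝ) :
    ∫ ζ : Fin 3 → ℝ, f (ζ 0) * g (ζ 1) * h (ζ 2) = (∫ x, f x) * (∫ x, g x) * ∫ x, h x := by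
  simpa [Fin.prod_univ_three, mul_assoc] using integral_fin_nat_prod_volume_eq_prod ![f, g, h]

theorem Integrable.fin_three_mul {f g h : ℝ → ℝ} (hf : Integrable f) (hg : Integrable g)
    (hh : Integrable h) : Integrable (fun ζ : Fin 3 → ℝ => f (ζ 0) * g (ζ 1) * h (ζ 2)) := by
  have := Integrable.fin_nat_prod (μ := fun _ => volume) (f := ![f, g, h]) fun i => by
    fin_cases i <;> assumption
  simpa [Fin.prod_univ_three, mul_assoc, volume_pi] using this

theorem enr_sq (ζ : Fin 3 → ℝ) : enr ζ ^ 2 = ζ 0 ^ 2 + ζ 1 ^ 2 + ζ 2 ^ 2 :=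
  sq_sqrt (by positivity)

theorem abs_phiα_le (α : Fin 3 → ℕ) (ζ : Fin 3 → ℝ) :
    |phiα α ζ| ≤ π ^ (-(3 : ℝ) / 4) * Aα α * exp (-enr ζ ^ 2 / 4) := by
  have hsplit : exp (-enr ζ ^ 2 / 2) = exp (-ζ 0 ^ 2 / 4) * exp (-ζ 1 ^ 2 / 4) *
      exp (-ζ 2 ^ 2 / 4) * exp (-enr ζ ^ 2 / 4) := by
    simp only [← exp_add, enr_sq]
    ring_nf
  have hA : Aα α = ((2 * (α 0 : ℝ)) ^ ((α 0 : ℝ) / 2) * exp (-(α 0 : ℝ) / 2)) *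
      ((2 * (α 1 : ℝ)) ^ ((α 1 : ℝ) / 2) * exp (-(α 1 : ℝ) / 2)) *
      ((2 * (α 2 : ℝ)) ^ ((α 2 : ℝ) / 2) * exp (-(α 2 : ℝ) / 2)) := by
    have hexp : exp (-((α 0 : ℝ) + α 1 + α 2) / 2) =
        exp (-(α 0 : ℝ) / 2) * exp (-(α 1 : ℝ) / 2) * exp (-(α 2 : ℝ) / 2) := by
      rw [← exp_add, ← exp_add]
      ring_nf
    rw [Aα, hexp]
    ring
  calc |phiα α ζ|
      _ = π ^ (-(3 : ℝ) / 4) * ((|ζ 0| ^ α 0 * exp (-ζ 0 ^ 2 / 4)) *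
        (|ζ 1| ^ α 1 * exp (-ζ 1 ^ 2 / 4)) * (|ζ 2| ^ α 2 * exp (-ζ 2 ^ 2 / 4))) *
        exp (-enr ζ ^ 2 / 4) := by
        rw [phiα, hsplit]
        simp only [abs_mul, abs_pow, abs_exp,
          abs_of_nonneg (by positivity : (0 : ℝ) ≤ π ^ (-(3 : ℝ) / 4))]
        ring
      _ ≤ π ^ (-(3 : ℝ) / 4) * Aα α * exp (-enr ζ ^ 2 / 4) := by
        rw [hA]
        gcongr _ * (?_ * ?_ * ?_) * _ <;> exact abs_pow_mul_exp_neg_sq_div_four_le _ _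

theorem Aα_nonneg (α : Fin 3 → ℕ) : 0 ≤ Aα α := by
  unfold Aα
  positivity

def integrandMajorant (c : ℝ) (ζ : Fin 3 → ℝ) : ℝ :=
  (Ioi 0).indicator (fun x => x ^ (-4 : ℝ) * exp (-c / x)) (ζ 0) *
    exp (-(1 / 4) * ζ 1 ^ 2) * exp (-(1 / 4) * ζ 2 ^ 2)

theorem integrandMajorant_nonneg (c : ℝ) (ζ : Fin 3 → ℝ) : 0 ≤ integrandMajorant c ζ := by
  have : 0 ≤ (Ioi 0).indicator (fun x => x ^ (-4 : ℝ) * exp (-c / x)) (ζ 0) :=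
    indicator_nonneg (fun x (hx : 0 < x) => by positivity) _
  unfold integrandMajorant
  positivity

theorem integrable_integrandMajorant {c : ℝ} (hc : 0 < c) : Integrable (integrandMajorant c) := by
  refine Integrable.fin_three_mul (f := (Ioi 0).indicator fun x => x ^ (-4 : ℝ) * exp (-c / x))
    (g := fun y => exp (-(1 / 4) * y ^ 2)) (h := fun y => exp (-(1 / 4) * y ^ 2)) ?_ ?_ ?_
  · exact (integrable_indicator_iff measurableSet_Ioi).2
      (integrableOn_rpow_neg_mul_exp_neg_div_Ioi (by norm_num) hc)
  all_goals exact integrable_exp_neg_mul_sq (by norm_num)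

theorem integral_integrandMajorant {c : ℝ} (hc : 0 < c) :
    ∫ ζ, integrandMajorant c ζ = 8 * π / c ^ 3 := by
  simp only [integrandMajorant]
  rw [integral_fin_three_mul ((Ioi 0).indicator fun x => x ^ (-4 : ℝ) * exp (-c / x))
    (fun y => exp (-(1 / 4) * y ^ 2)) (fun y => exp (-(1 / 4) * y ^ 2)),
    integral_indicator measurableSet_Ioi, integral_rpow_neg_mul_exp_neg_div_Ioi (by norm_num) hc,
    integral_gaussian, mul_assoc, mul_self_sqrt (by positivity)]
  norm_num [rpow_ofNat]
  field_simp
  norm_num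

theorem integrand_le_integrandMajorant {γ ν₀ ν₁ v t : ℝ} {α : Fin 3 → ℕ} {ζ : Fin 3 → ℝ}
    (hγ0 : 0 ≤ γ) (hγ1 : γ ≤ 1) (hν₀ : 0 ≤ ν₀) (hν₁ : 0 ≤ ν₁)
    (hv : ν₀ * (1 + enr ζ) ^ γ ≤ v ∧ v ≤ ν₁ * (1 + enr ζ) ^ γ) (ht : 0 ≤ t) (hζ : 0 < ζ 0) :
    |phiα α ζ| ^ 2 * (v / ζ 0 ^ 2) ^ 2 * exp (-(2 * v * t) / ζ 0) ≤
      4 * π ^ (-(3 : ℝ) / 2) * ν₁ ^ 2 * Aα α ^ 2 * integrandMajorant (2 * ν₀ * t) ζ := by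
  rw [integrandMajorant, indicator_of_mem (show ζ 0 ∈ Ioi 0 from hζ)]
  obtain ⟨hlo, hhi⟩ := hv
  set r := enr ζ with hr_def
  have hr : 0 ≤ r := sqrt_nonneg _
  have hγ_lo : 1 ≤ (1 + r) ^ γ := one_le_rpow (by linarith) hγ0
  have hγ_hi : (1 + r) ^ γ ≤ 1 + r := by
    simpa using rpow_le_rpow_of_exponent_le (by linarith : 1 ≤ 1 + r) hγ1
  have hv₀ : ν₀ ≤ v := by nlinarith
  have hv₁ : v ≤ ν₁ * (1 + r) := hhi.trans (by gcongr)
  have hφ : |phiα α ζ| ^ 2 ≤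
      π ^ (-(3 : ℝ) / 2) * Aα α ^ 2 * (exp (-r ^ 2 / 4) * exp (-r ^ 2 / 4)) := by
    calc |phiα α ζ| ^ 2 ≤ (π ^ (-(3 : ℝ) / 4) * Aα α * exp (-r ^ 2 / 4)) ^ 2 := by
          gcongr
          exact abs_phiα_le α ζ
      _ = _ := by
        rw [mul_pow, mul_pow, ← rpow_natCast, ← rpow_mul pi_pos.le, sq (exp _)]
        norm_num
  have hquot : (v / ζ 0 ^ 2) ^ 2 ≤ ν₁ ^ 2 * (1 + r) ^ 2 * ζ 0 ^ (-4 : ℝ) := by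
    rw [div_pow, ← pow_mul, rpow_neg hζ.le, ← mul_pow, div_eq_mul_inv]
    gcongr
    · linarith
    · norm_num
  have hexp : exp (-(2 * v * t) / ζ 0) ≤ exp (-(2 * ν₀ * t) / ζ 0) := by
    gcongr
  have hgauss : exp (-r ^ 2 / 4) ≤ exp (-(1 / 4) * ζ 1 ^ 2) * exp (-(1 / 4) * ζ 2 ^ 2) := by
    rw [← exp_add, exp_le_exp, hr_def, enr_sq]
    nlinarith [sq_nonneg (ζ 0)]
  calc |phiα α ζ| ^ 2 * (v / ζ 0 ^ 2) ^ 2 * exp (-(2 * v * t) / ζ 0)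
      ≤ π ^ (-(3 : ℝ) / 2) * Aα α ^ 2 * (exp (-r ^ 2 / 4) * exp (-r ^ 2 / 4)) *
          (ν₁ ^ 2 * (1 + r) ^ 2 * ζ 0 ^ (-4 : ℝ)) * exp (-(2 * ν₀ * t) / ζ 0) := by
        gcongr
    _ = π ^ (-(3 : ℝ) / 2) * ν₁ ^ 2 * Aα α ^ 2 * ((1 + r) ^ 2 * exp (-r ^ 2 / 4)) *
          exp (-r ^ 2 / 4) * (ζ 0 ^ (-4 : ℝ) * exp (-(2 * ν₀ * t) / ζ 0)) := by ring
    _ ≤ π ^ (-(3 : ℝ) / 2) * ν₁ ^ 2 * Aα α ^ 2 * 4 *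
          (exp (-(1 / 4) * ζ 1 ^ 2) * exp (-(1 / 4) * ζ 2 ^ 2)) *
          (ζ 0 ^ (-4 : ℝ) * exp (-(2 * ν₀ * t) / ζ 0)) := by
        gcongr
        exact one_add_sq_mul_exp_neg_sq_div_four_le r
    _ = _ := by ring

theorem rpow_neg_three_halves_mul_pi : π ^ (-(3 : ℝ) / 2) * π = (√π)⁻¹ := by
  rw [sqrt_eq_rpow, ← rpow_neg pi_pos.le, ← rpow_add_one pi_pos.ne']
  norm_num

theorem setIntegral_integrand_le {γ ν₀ ν₁ t : ℝ} {ν : (Fin 3 → ℝ) → ℝ} (hγ0 : 0 ≤ γ)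
    (hγ1 : γ ≤ 1) (hν₀ : 0 < ν₀) (hν₁ : 0 ≤ ν₁)
    (hν : ∀ ζ, ν₀ * (1 + enr ζ) ^ γ ≤ ν ζ ∧ ν ζ ≤ ν₁ * (1 + enr ζ) ^ γ) (α : Fin 3 → ℕ)
    (ht : 0 < t) :
    ∫ ζ in {ζ : Fin 3 → ℝ | 0 < ζ 0},
        |phiα α ζ| ^ 2 * (ν ζ / ζ 0 ^ 2) ^ 2 * exp (-(2 * ν ζ * t) / ζ 0) ≤
      4 * ν₁ ^ 2 / (√π * ν₀ ^ 3) * Aα α ^ 2 * (t ^ 3)⁻¹ := by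
  set K := 4 * π ^ (-(3 : ℝ) / 2) * ν₁ ^ 2 * Aα α ^ 2 with hK
  have hc : 0 < 2 * ν₀ * t := by positivity
  have hD := (integrable_integrandMajorant hc).const_mul K
  calc ∫ ζ in {ζ : Fin 3 → ℝ | 0 < ζ 0},
        |phiα α ζ| ^ 2 * (ν ζ / ζ 0 ^ 2) ^ 2 * exp (-(2 * ν ζ * t) / ζ 0)
      ≤ ∫ ζ in {ζ : Fin 3 → ℝ | 0 < ζ 0}, K * integrandMajorant (2 * ν₀ * t) ζ := by
        refine integral_mono_of_nonneg (ae_of_all _ fun ζ => by positivity) hD.integrableOn ?_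
        refine (ae_restrict_mem (measurableSet_lt measurable_const (measurable_pi_apply 0))).mono
          fun ζ (hζ : 0 < ζ 0) => ?_
        exact integrand_le_integrandMajorant hγ0 hγ1 hν₀.le hν₁ (hν ζ) ht.le hζ
    _ ≤ ∫ ζ, K * integrandMajorant (2 * ν₀ * t) ζ :=
        setIntegral_le_integral hD (ae_of_all _ fun ζ =>
          mul_nonneg (by positivity) (integrandMajorant_nonneg _ ζ))
    _ = 4 * ν₁ ^ 2 / (√π * ν₀ ^ 3) * Aα α ^ 2 * (t ^ 3)⁻¹ := by
        rw [integral_const_mul, integral_integrandMajorant hc, div_eq_mul_inv (4 * ν₁ ^ 2), mul_inv, ← rpow_neg_three_halves_mul_pi, hK]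
        field_simp
        ring

/-- the L² bound ‖φ_α ν(ζ)/ζ₁² e^{-ν t/ζ₁}‖_{L²({ζ₁>0})}
≤ C A_α t^{-3/2}(1+|ln t|)^{1/2}, with C depending only on γ, ν₀, ν₁. -/
theorem stmt12 (γ ν₀ ν₁ : ℝ) (hγ0 : 0 < γ) (hγ1 : γ ≤ 1) (hν₀ : 0 < ν₀) (hν₀₁ : ν₀ < ν₁) :
    ∃ C > (0 : ℝ), ∀ ν : (Fin 3 → ℝ) → ℝ, Measurable ν →
      (∀ ζ, ν₀ * (1 + enr ζ) ^ γ ≤ ν ζ ∧ ν ζ ≤ ν₁ * (1 + enr ζ) ^ γ) →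
      ∀ (α : Fin 3 → ℕ) (t : ℝ), 0 < t → t ≤ 1 →
        Real.sqrt (∫ ζ in {ζ : Fin 3 → ℝ | 0 < ζ 0},
            |phiα α ζ| ^ 2 * (ν ζ / (ζ 0) ^ 2) ^ 2 * Real.exp (-(2 * ν ζ * t) / ζ 0)) ≤
          C * Aα α * t ^ (-(3 : ℝ) / 2) * (1 + |Real.log t|) ^ ((1 : ℝ) / 2) := by
  have hν₁ : 0 < ν₁ := hν₀.trans hν₀₁
  refine ⟨√(4 * ν₁ ^ 2 / (√π * ν₀ ^ 3)), by positivity, fun ν _ hν α t ht _ => ?_⟩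
  have hlog : 1 ≤ (1 + |log t|) ^ ((1 : ℝ) / 2) :=
    one_le_rpow (le_add_of_nonneg_right (abs_nonneg _)) (by norm_num)
  have hsqrt : √((t ^ 3)⁻¹) = t ^ (-(3 : ℝ) / 2) := by
    rw [sqrt_inv, ← rpow_natCast, sqrt_eq_rpow, ← rpow_mul ht.le, ← rpow_neg ht.le]
    norm_num
  calc √(∫ ζ in {ζ : Fin 3 → ℝ | 0 < ζ 0},
          |phiα α ζ| ^ 2 * (ν ζ / ζ 0 ^ 2) ^ 2 * exp (-(2 * ν ζ * t) / ζ 0))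
      ≤ √(4 * ν₁ ^ 2 / (√π * ν₀ ^ 3) * Aα α ^ 2 * (t ^ 3)⁻¹) :=
        sqrt_le_sqrt (setIntegral_integrand_le hγ0.le hγ1 hν₀ hν₁.le hν α ht)
    _ = √(4 * ν₁ ^ 2 / (√π * ν₀ ^ 3)) * Aα α * t ^ (-(3 : ℝ) / 2) := by
        rw [sqrt_mul (by positivity), sqrt_mul (by positivity), sqrt_sq (Aα_nonneg α), hsqrt]
    _ ≤ _ := le_mul_of_one_le_right (by have := Aα_nonneg α; positivity) hlog
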